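/- (Lemma 1.) Let the bias b_ℓ = 0 and the learning rate r_ℓ > 0. Fix a word a ∈ W with (a,a) ∉ P, and an index j. Let Δ⁺_a[j] = α·Σ_{b:(a,b)∈P} B(b)_j·(1 − 2·B(a)_j) be the gradient of the positive sub-loss L_{a,·}(B) = α·Σ_{b:(a,b)∈P} ℓ(B(a),B(b)) with respect to bit j of B(a). If the flip probability max(0, ½·tanh(2·r_ℓ·Δ⁺_a[j])) is strictly positive, then flipping bit j of B(a) strictly decreases this sub-loss: L_{a,·}(B^{(a,j)}) = L_{a,·}(B) − Δ⁺_a[j] < L_{a,·}(B); moreover necessarily B(a)_j = 0 and Δ⁺_a[j] = α·#{b : (a,b) ∈ P, B(b)_j = 1} ≥ α. -/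
import Mathlib


/-- Flip bit `j` of the binary vector `a`. -/
def flipBit {d : ℕ} (a : Fin d → Fin 2) (j : Fin d) : Fin d → Fin 2 :=
  Function.update a j (1 - a j)

/-- Positive violation count: number of indices `k` with `a k = 0` and `b k = 1`. -/
def posViol {d : ℕ} (a b : Fin d → Fin 2) : ℕ :=
  (Finset.univ.filter (fun k => a k = 0 ∧ b k = 1)).card

/-- A bit interpreted as a real number. -/
def bitR {d : ℕ} (a : Fin d → Fin 2) (j : Fin d) : ℝ := ((a j : ℕ) : ℝ)

/-- The positive sub-loss associated with pairs whose first component is `a`. -/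
noncomputable def subLossFst {W : Type*} [DecidableEq W] {d : ℕ} (α : ℝ)
    (P : Finset (W × W)) (B : W → Fin d → Fin 2) (a : W) : ℝ :=
  α * ∑ p ∈ P.filter (fun p => p.1 = a), (posViol (B p.1) (B p.2) : ℝ)

/-- The gradient of the positive sub-loss with respect to bit `j` of `B a`. -/
noncomputable def gradPosFst {W : Type*} [DecidableEq W] {d : ℕ} (α : ℝ)
    (P : Finset (W × W)) (B : W → Fin d → Fin 2) (a : W) (j : Fin d) : ℝ :=
  α * ∑ p ∈ P.filter (fun p => p.1 = a), bitR (B p.2) j * (1 - 2 * bitR (B a) j)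

lemma fin2_cases (x : Fin 2) : x = 0 ∨ x = 1 := by omega

lemma posViol_flip {d : ℕ} (a b : Fin d → Fin 2) (j : Fin d) (h : a j = 0) :
    (posViol (flipBit a j) b : ℝ) = (posViol a b : ℝ) - bitR b j := by
  have hset : (Finset.univ.filter (fun k => flipBit a j k = 0 ∧ b k = 1))
      = (Finset.univ.filter (fun k => a k = 0 ∧ b k = 1)).erase j := by
    ext k
    simp only [Finset.mem_filter, Finset.mem_erase, Finset.mem_univ, true_and]
    constructor
    · rintro ⟨h0, h1⟩
      have hkj : k ≠ j := by
        rintro rfl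
        simp [flipBit, h] at h0
      rw [flipBit, Function.update_of_ne hkj] at h0
      exact ⟨hkj, h0, h1⟩
    · rintro ⟨hkj, h0, h1⟩
      rw [flipBit, Function.update_of_ne hkj]
      exact ⟨h0, h1⟩
  rcases fin2_cases (b j) with hb | hb
  · have hj : j ∉ (Finset.univ.filter (fun k => a k = 0 ∧ b k = 1)) := by
      simp [hb]
    rw [posViol, posViol, hset, Finset.erase_eq_of_notMem hj, bitR, hb]
    simp
  · have hj : j ∈ (Finset.univ.filter (fun k => a k = 0 ∧ b k = 1)) := by
      simp [hb, h]
    rw [posViol, posViol, hset, Finset.card_erase_of_mem hj, bitR, hb]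
    have : 1 ≤ (Finset.univ.filter (fun k => a k = 0 ∧ b k = 1)).card :=
      Finset.card_pos.mpr ⟨j, hj⟩
    rw [Nat.cast_sub this]
    norm_num

/-- Lemma 1: if the flip probability of bit `j` of `B a` is strictly positive (with zero
bias), then flipping that bit strictly decreases the positive sub-loss associated with `a`. -/
theorem flip_decreases_subLossFst {W : Type*} [DecidableEq W] {d : ℕ}
    (α rℓ : ℝ) (hα : 0 < α) (hr : 0 < rℓ) (P : Finset (W × W))
    (B : W → Fin d → Fin 2) (a : W) (ha : (a, a) ∉ P) (j : Fin d)
    (hprob : 0 < max 0 (1 / 2 * Real.tanh (2 * (rℓ * gradPosFst α P B a j)))) :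
    subLossFst α P (Function.update B a (flipBit (B a) j)) a
        = subLossFst α P B a - gradPosFst α P B a j ∧
    subLossFst α P (Function.update B a (flipBit (B a) j)) a < subLossFst α P B a ∧
    B a j = 0 ∧
    gradPosFst α P B a j
        = α * ((P.filter (fun p => p.1 = a ∧ B p.2 j = 1)).card : ℝ) ∧
    α ≤ gradPosFst α P B a j := by
  -- positivity of the gradient
  have hgrad : 0 < gradPosFst α P B a j := by
    rcases lt_max_iff.mp hprob with h | h
    · exact absurd h (lt_irrefl 0)
    · have htanh : 0 < Real.tanh (2 * (rℓ * gradPosFst α P B a j)) := by linarith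
      rw [Real.tanh_eq_sinh_div_cosh] at htanh
      have := (div_pos_iff.mp htanh)
      rcases this with ⟨hs, _⟩ | ⟨_, hc⟩
      · have := Real.sinh_pos_iff.mp hs
        nlinarith
      · exact absurd hc (not_lt.mpr (Real.cosh_pos _).le)
  -- B a j = 0
  have hBa : B a j = 0 := by
    rcases fin2_cases (B a j) with h | h
    · exact h
    · exfalso
      have hb1 : bitR (B a) j = 1 := by rw [bitR, h]; norm_num
      have hle : gradPosFst α P B a j ≤ 0 := by
        rw [gradPosFst]
        apply mul_nonpos_of_nonneg_of_nonpos hα.le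
        apply Finset.sum_nonpos
        intro p _
        rw [hb1]
        have : (0:ℝ) ≤ bitR (B p.2) j := Nat.cast_nonneg _
        nlinarith
      linarith
  have hb0 : bitR (B a) j = 0 := by rw [bitR, hBa]; norm_num
  -- sum over filter: p.2 ≠ a on the filter (since (a,a) ∉ P)
  have hp2 : ∀ p ∈ P.filter (fun p => p.1 = a), p.2 ≠ a := by
    intro p hp
    rw [Finset.mem_filter] at hp
    rintro h2
    have : p = (a, a) := Prod.ext hp.2 h2
    rw [this] at hp
    exact ha hp.1
  -- grad as sum of bits
  have hgrad_eq : gradPosFst α P B a j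
      = α * ∑ p ∈ P.filter (fun p => p.1 = a), bitR (B p.2) j := by
    rw [gradPosFst]
    congr 1
    apply Finset.sum_congr rfl
    intro p _
    rw [hb0]; ring
  -- equality of losses
  have heq : subLossFst α P (Function.update B a (flipBit (B a) j)) a
      = subLossFst α P B a - gradPosFst α P B a j := by
    rw [subLossFst, subLossFst, hgrad_eq, ← mul_sub, ← Finset.sum_sub_distrib]
    congr 1
    apply Finset.sum_congr rfl
    intro p hp
    have h1 : p.1 = a := (Finset.mem_filter.mp hp).2
    have h2 : p.2 ≠ a := hp2 p hp
    rw [h1, Function.update_self, Function.update_of_ne h2]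
    exact posViol_flip (B a) (B p.2) j hBa
  refine ⟨heq, by linarith, hBa, ?_, ?_⟩
  -- grad = α * card
  · rw [hgrad_eq]
    congr 1
    rw [← Finset.sum_filter_ne_zero, Finset.filter_filter]
    have hfe : P.filter (fun p => p.1 = a ∧ bitR (B p.2) j ≠ 0)
        = P.filter (fun p => p.1 = a ∧ B p.2 j = 1) := by
      apply Finset.filter_congr
      intro p _
      constructor
      · rintro ⟨h1, h2⟩
        refine ⟨h1, ?_⟩
        rcases fin2_cases (B p.2 j) with h | h
        · exact absurd (by rw [bitR, h]; norm_num) h2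
        · exact h
      · rintro ⟨h1, h2⟩
        exact ⟨h1, by rw [bitR, h2]; norm_num⟩
    rw [hfe]
    rw [Finset.sum_congr rfl (fun p hp => ?_), Finset.sum_const, nsmul_eq_mul, mul_one]
    have := (Finset.mem_filter.mp hp).2.2
    rw [bitR, this]; norm_num
  -- α ≤ grad
  · have hcard : gradPosFst α P B a j
        = α * ((P.filter (fun p => p.1 = a ∧ B p.2 j = 1)).card : ℝ) := by
      rw [hgrad_eq]
      congr 1
      rw [← Finset.sum_filter_ne_zero, Finset.filter_filter]
      have hfe : P.filter (fun p => p.1 = a ∧ bitR (B p.2) j ≠ 0)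
          = P.filter (fun p => p.1 = a ∧ B p.2 j = 1) := by
        apply Finset.filter_congr
        intro p _
        constructor
        · rintro ⟨h1, h2⟩
          refine ⟨h1, ?_⟩
          rcases fin2_cases (B p.2 j) with h | h
          · exact absurd (by rw [bitR, h]; norm_num) h2
          · exact h
        · rintro ⟨h1, h2⟩
          exact ⟨h1, by rw [bitR, h2]; norm_num⟩
      rw [hfe]
      rw [Finset.sum_congr rfl (fun p hp => ?_), Finset.sum_const, nsmul_eq_mul, mul_one]
      have := (Finset.mem_filter.mp hp).2.2
      rw [bitR, this]; norm_num
    rw [hcard]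
    rw [hcard] at hgrad
    have hcpos : (0:ℝ) < ((P.filter (fun p => p.1 = a ∧ B p.2 j = 1)).card : ℝ) := by
      by_contra h
      push_neg at h
      nlinarith [Nat.cast_nonneg (α := ℝ) (P.filter (fun p => p.1 = a ∧ B p.2 j = 1)).card]
    have h1le : (1:ℝ) ≤ ((P.filter (fun p => p.1 = a ∧ B p.2 j = 1)).card : ℝ) := by
      have : 1 ≤ (P.filter (fun p => p.1 = a ∧ B p.2 j = 1)).card := by
        by_contra h
        push_neg at h
        interval_cases hh : (P.filter (fun p => p.1 = a ∧ B p.2 j = 1)).card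
        · simp [hh] at hcpos
      exact_mod_cast this
    nlinarith
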